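/- Let B = [[b,a,c],[aᵀ,0,-aᵀ],[cᵀ,-a,-b]] ∈ Sym_{2n+r}(ℝ) with b symmetric, c skew-symmetric, a of size n×r, let W = [[0],[0],[I_n]] and J' = -[[0,0,I_n],[0,I_r,0],[I_n,0,0]]. Define Φ(s) = Wᵀ J' e^{sB} W and Γ(s) = Wᵀ e^{sB} W. Then the function Δ(s) = Φ(s)Γ(s)⁻¹ has Taylor expansion Δ(s) = -c s + (a aᵀ - bc - cb) s²/2 + O(s³) at s = 0. -/

import Mathlib

/-!
With `E s = exp (s • B)`, `Φ = Wᵀ J' E W` and `Γ = Wᵀ E W` we have `Φ' = Wᵀ J' B E W`,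
`Φ'' = Wᵀ J' B² E W`, `Γ' = Wᵀ B E W`, and `Γ 0 = Wᵀ W = 1`, `Φ 0 = Wᵀ J' W = 0`.
Differentiating `Δ = Φ Γ⁻¹` twice, every term containing `Φ 0` drops out, leaving `Δ' 0 = Φ' 0` and
`Δ'' 0 = Φ'' 0 - 2 Φ' 0 Γ' 0`. Block multiplication gives `Φ' 0 = -c`, `Γ' 0 = -b` and
`Φ'' 0 = a aᵀ + c b - b c`, so `Δ'' 0 = a aᵀ + c b - b c - 2 c b`.
-/

open Matrix

/-- Entrywise derivative of a matrix-valued function of a real variable. -/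
noncomputable def matDeriv {m n : Type*} (f : ℝ → Matrix m n ℝ) (s : ℝ) : Matrix m n ℝ :=
  Matrix.of fun i j => deriv (fun t => f t i j) s

open scoped Topology Ring

section RingInverse

variable {R : Type*} [NormedRing R] [NormedAlgebra ℝ R] [HasSummableGeomSeries R] {s : ℝ}

theorem HasDerivAt.ringInverse {Γ : ℝ → R} {Γ' : R} (hΓ : HasDerivAt Γ Γ' s)
    (hs : IsUnit (Γ s)) :
    HasDerivAt (fun t => (Γ t)⁻¹ʳ) (-((Γ s)⁻¹ʳ * Γ' * (Γ s)⁻¹ʳ)) s := by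
  obtain ⟨u, hu⟩ := hs
  rw [← hu, Ring.inverse_unit]
  exact (hasFDerivAt_ringInverse (𝕜 := ℝ) u).comp_hasDerivAt_of_eq s hΓ hu

theorem HasDerivAt.mul_ringInverse {Φ Γ : ℝ → R} {Φ' Γ' : R} (hΦ : HasDerivAt Φ Φ' s)
    (hΓ : HasDerivAt Γ Γ' s) (hs : IsUnit (Γ s)) :
    HasDerivAt (fun t => Φ t * (Γ t)⁻¹ʳ)
      (Φ' * (Γ s)⁻¹ʳ - Φ s * ((Γ s)⁻¹ʳ * Γ' * (Γ s)⁻¹ʳ)) s :=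
  (hΦ.fun_mul (hΓ.ringInverse hs)).congr_deriv (by rw [mul_neg, sub_eq_add_neg])

variable {Φ Γ Φ' Γ' : ℝ → R}

theorem eventually_hasDerivAt_mul_ringInverse (hΦ : ∀ t, HasDerivAt Φ (Φ' t) t)
    (hΓ : ∀ t, HasDerivAt Γ (Γ' t) t) (hs : IsUnit (Γ s)) :
    ∀ᶠ t in 𝓝 s, HasDerivAt (fun t => Φ t * (Γ t)⁻¹ʳ)
      (Φ' t * (Γ t)⁻¹ʳ - Φ t * ((Γ t)⁻¹ʳ * Γ' t * (Γ t)⁻¹ʳ)) t := by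
  have hunit : ∀ᶠ t in 𝓝 s, IsUnit (Γ t) :=
    (hΓ s).continuousAt.eventually_mem (Units.isOpen.mem_nhds hs)
  exact hunit.mono fun t ht => (hΦ t).mul_ringInverse (hΓ t) ht

theorem HasDerivAt.mul_ringInverse_deriv_of_eq_zero_of_eq_one {Φ'' Γ'' : R}
    (hΦ : HasDerivAt Φ (Φ' s) s) (hΓ : HasDerivAt Γ (Γ' s) s)
    (hΦ' : HasDerivAt Φ' Φ'' s) (hΓ' : HasDerivAt Γ' Γ'' s) (hΦs : Φ s = 0)
    (hΓs : Γ s = 1) :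
    HasDerivAt (fun t => Φ' t * (Γ t)⁻¹ʳ - Φ t * ((Γ t)⁻¹ʳ * Γ' t * (Γ t)⁻¹ʳ))
      (Φ'' - 2 * (Φ' s * Γ' s)) s := by
  have hG := hΓ.ringInverse (hΓs ▸ isUnit_one)
  refine ((hΦ'.fun_mul hG).fun_sub (hΦ.fun_mul ((hG.fun_mul hΓ').fun_mul hG))).congr_deriv ?_
  rw [hΦs, hΓs, Ring.inverse_one]
  noncomm_ring

end RingInverse

section MatrixCalculus

/- `matDeriv` and `NormedSpace.exp` only see the topology of matrices, so any norm inducing it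
will do; the `L∞` operator norm makes square matrices a normed algebra. -/
attribute [local instance] Matrix.linftyOpNormedAddCommGroup Matrix.linftyOpNormedSpace
  Matrix.linftyOpNormedRing Matrix.linftyOpNormedAlgebra

variable {l m n : Type*} [Fintype l] [Fintype m] [Fintype n] {s : ℝ}

theorem matDeriv_eq_of_hasDerivAt {f : ℝ → Matrix m n ℝ} {f' : Matrix m n ℝ}
    (h : HasDerivAt f f' s) : matDeriv f s = f' := by
  ext i j
  exact ((entryLinearMap ℝ ℝ i j).toContinuousLinearMap.hasFDerivAt.comp_hasDerivAt s h).deriv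

theorem matDeriv_matDeriv_eq_of_eventually_hasDerivAt {f f' : ℝ → Matrix m n ℝ}
    {f'' : Matrix m n ℝ} (hf : ∀ᶠ t in 𝓝 s, HasDerivAt f (f' t) t)
    (hf' : HasDerivAt f' f'' s) :
    matDeriv (matDeriv f) s = f'' := by
  have hev : matDeriv f =ᶠ[𝓝 s] f' := hf.mono fun t ht => matDeriv_eq_of_hasDerivAt ht
  rw [← matDeriv_eq_of_hasDerivAt hf']
  ext i j
  exact (hev.fun_comp (· i j)).deriv_eq

theorem HasDerivAt.matrix_mul_mul {f : ℝ → Matrix m m ℝ} {f' : Matrix m m ℝ}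
    (X : Matrix l m ℝ) (Y : Matrix m n ℝ) (h : HasDerivAt f f' s) :
    HasDerivAt (fun t => X * f t * Y) (X * f' * Y) s :=
  (mulRightLinearMap l ℝ Y ∘ₗ mulLeftLinearMap m ℝ X).toContinuousLinearMap.hasFDerivAt
    |>.comp_hasDerivAt s h

theorem taylor_compressed_exp_mul_inv [DecidableEq m] [DecidableEq n] (B : Matrix m m ℝ)
    (P U : Matrix n m ℝ) (Q : Matrix m n ℝ) (hPQ : P * Q = 0) (hUQ : U * Q = 1)
    (Δ : ℝ → Matrix n n ℝ)
    (hΔ : ∀ s, Δ s =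
      (P * NormedSpace.exp (s • B) * Q) * (U * NormedSpace.exp (s • B) * Q)⁻¹) :
    Δ 0 = 0 ∧ matDeriv Δ 0 = P * B * Q ∧
      matDeriv (matDeriv Δ) 0 = P * B * B * Q - 2 * (P * B * Q * (U * B * Q)) := by
  set E : ℝ → Matrix m m ℝ := fun t => NormedSpace.exp (t • B)
  have hE : ∀ t, HasDerivAt E (B * E t) t := hasDerivAt_exp_smul_const' B
  have hE0 : E 0 = 1 := by simp [E]
  have hΦ : ∀ t, HasDerivAt (fun t => P * E t * Q) (P * (B * E t) * Q) t :=
    fun t => (hE t).matrix_mul_mul P Q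
  have hΓ : ∀ t, HasDerivAt (fun t => U * E t * Q) (U * (B * E t) * Q) t :=
    fun t => (hE t).matrix_mul_mul U Q
  have hΦ0 : P * E 0 * Q = 0 := by rw [hE0, Matrix.mul_one, hPQ]
  have hΓ0 : U * E 0 * Q = 1 := by rw [hE0, Matrix.mul_one, hUQ]
  have hΓ0_unit : IsUnit (U * E 0 * Q) := hΓ0 ▸ isUnit_one
  have hΔE : Δ = fun t => P * E t * Q * (U * E t * Q)⁻¹ʳ :=
    funext fun t => by rw [hΔ, nonsing_inv_eq_ringInverse]
  rw [hΔE]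
  refine ⟨by simp [hΦ0], ?_, ?_⟩
  · rw [matDeriv_eq_of_hasDerivAt ((hΦ 0).mul_ringInverse (hΓ 0) hΓ0_unit), hΦ0, hΓ0, hE0]
    simp
  · have hE' : HasDerivAt (fun t => B * E t) (B * (B * E 0)) 0 := (hE 0).const_mul B
    rw [matDeriv_matDeriv_eq_of_eventually_hasDerivAt
      (eventually_hasDerivAt_mul_ringInverse hΦ hΓ hΓ0_unit)
      ((hΦ 0).mul_ringInverse_deriv_of_eq_zero_of_eq_one (hΓ 0) (hE'.matrix_mul_mul P Q)
        (hE'.matrix_mul_mul U Q) hΦ0 hΓ0)]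
    simp [hE0, Matrix.mul_assoc]

end MatrixCalculus

theorem stmt14_general (n r : ℕ)
    (b : Matrix (Fin n) (Fin n) ℝ) (a : Matrix (Fin n) (Fin r) ℝ)
    (c : Matrix (Fin n) (Fin n) ℝ)
    (B J' : Matrix (Fin n ⊕ (Fin r ⊕ Fin n)) (Fin n ⊕ (Fin r ⊕ Fin n)) ℝ)
    (hB : B = Matrix.fromBlocks b (Matrix.fromCols a c) (Matrix.fromRows aᵀ cᵀ)
      (Matrix.fromBlocks 0 (-aᵀ) (-a) (-b)))
    (hJ' : J' = -(Matrix.fromBlocks 0 (Matrix.fromCols 0 1) (Matrix.fromRows 0 1)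
      (Matrix.fromBlocks 1 0 0 0)))
    (W : Matrix (Fin n ⊕ (Fin r ⊕ Fin n)) (Fin n) ℝ)
    (hW : W = Matrix.fromRows 0 (Matrix.fromRows 0 1))
    (Δ : ℝ → Matrix (Fin n) (Fin n) ℝ)
    (hΔ : ∀ s, Δ s = (Wᵀ * J' * NormedSpace.exp (s • B) * W) *
      (Wᵀ * NormedSpace.exp (s • B) * W)⁻¹) :
    Δ 0 = 0 ∧ matDeriv Δ 0 = -c ∧
      matDeriv (fun s => matDeriv Δ s) 0 = a * aᵀ - b * c - c * b := by
  have hWJW : Wᵀ * J' * W = 0 := by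
    subst hJ' hW
    simp [transpose_fromRows, fromCols_mul_fromRows, fromCols_mul_fromBlocks]
  have hWW : Wᵀ * W = 1 := by
    subst hW
    simp [transpose_fromRows, fromCols_mul_fromRows]
  have hWJBW : Wᵀ * J' * B * W = -c := by
    subst hB hJ' hW
    simp [transpose_fromRows, fromCols_mul_fromRows, fromCols_mul_fromBlocks]
  have hWBW : Wᵀ * B * W = -b := by
    subst hB hW
    simp [transpose_fromRows, fromCols_mul_fromRows, fromCols_mul_fromBlocks]
  have hWJBBW : Wᵀ * J' * B * B * W = a * aᵀ + c * b - b * c := by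
    subst hB hJ' hW
    simp [transpose_fromRows, fromCols_mul_fromRows, fromCols_mul_fromBlocks, Matrix.add_mul]
    abel
  obtain ⟨hΔ0, hΔ1, hΔ2⟩ :=
    taylor_compressed_exp_mul_inv B (Wᵀ * J') Wᵀ W hWJW hWW Δ hΔ
  refine ⟨hΔ0, hΔ1.trans hWJBW, ?_⟩
  rw [hΔ2, hWJBBW, hWJBW, hWBW]
  noncomm_ring

/-- for `B = [[b,a,c],[aᵀ,0,-aᵀ],[cᵀ,-a,-b]]` with `b` symmetric and
`c` skew-symmetric, `W = [[0],[0],[I_n]]` and `J' = -[[0,0,I],[0,I,0],[I,0,0]]`,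
the function `Δ(s) = Φ(s)Γ(s)⁻¹`, with `Φ(s) = WᵀJ'e^{sB}W` and `Γ(s) = Wᵀe^{sB}W`,
has Taylor expansion `Δ(s) = -cs + (aaᵀ - bc - cb)s²/2 + O(s³)` at `s = 0`,
i.e. `Δ(0) = 0`, `Δ'(0) = -c`, `Δ''(0) = aaᵀ - bc - cb`. -/
theorem stmt14 (n r : ℕ)
    (b : Matrix (Fin n) (Fin n) ℝ) (a : Matrix (Fin n) (Fin r) ℝ)
    (c : Matrix (Fin n) (Fin n) ℝ) (hb : bᵀ = b) (hc : cᵀ = -c)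
    (B J' : Matrix (Fin n ⊕ (Fin r ⊕ Fin n)) (Fin n ⊕ (Fin r ⊕ Fin n)) ℝ)
    (hB : B = Matrix.fromBlocks b (Matrix.fromCols a c) (Matrix.fromRows aᵀ cᵀ)
      (Matrix.fromBlocks 0 (-aᵀ) (-a) (-b)))
    (hJ' : J' = -(Matrix.fromBlocks 0 (Matrix.fromCols 0 1) (Matrix.fromRows 0 1)
      (Matrix.fromBlocks 1 0 0 0)))
    (W : Matrix (Fin n ⊕ (Fin r ⊕ Fin n)) (Fin n) ℝ)
    (hW : W = Matrix.fromRows 0 (Matrix.fromRows 0 1))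
    (Δ : ℝ → Matrix (Fin n) (Fin n) ℝ)
    (hΔ : ∀ s, Δ s = (Wᵀ * J' * NormedSpace.exp (s • B) * W) *
      (Wᵀ * NormedSpace.exp (s • B) * W)⁻¹) :
    Δ 0 = 0 ∧ matDeriv Δ 0 = -c ∧
      matDeriv (fun s => matDeriv Δ s) 0 = a * aᵀ - b * c - c * b :=
  stmt14_general n r b a c B J' hB hJ' W hW Δ hΔ
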